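/- arXiv:2211.14897 — 2 statements merged into one kernel-verified Lean document; each statement's English description precedes it below -/
import Mathlib

section
/- Let 𝓘 ⊆ [p] be a set of intervention targets and let 𝒟 and 𝒟' be DAGs on [p] that are 𝓘-equivalent. Then for every model (B, {Ω^e}_{e∈ℰ}) over a finite collection of environments ℰ with B compatible with 𝒟 and whose intervention target set { j : ∃ e, f ∈ ℰ, Ω^e_{jj} ≠ Ω^f_{jj} } equals 𝓘, there exists a model (B~, {Ω~^e}_{e∈ℰ}) such that B~ is compatible with 𝒟', the intervention target set { j : ∃ e, f ∈ ℰ, Ω~^e_{jj} ≠ Ω~^f_{jj} } equals 𝓘, and (I−B)⁻¹ Ω^e (I−B)⁻ᵀ = (I−B~)⁻¹ Ω~^e (I−B~)⁻ᵀ for every e ∈ ℰ. -/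
/-!
By the transformational characterisation of Markov equivalence (Chickering), adapted to
interventions, `𝒟` is turned into `𝒟'` by successively reversing covered edges `v → w`
(edges with `PA(w) = PA(v) ∪ {v}`) whose endpoints lie outside `𝓘`: among the edges of `𝒟`
reversed in `𝒟'`, take one whose head comes first in a topological order of `𝒟` and, among
those into that head, one whose tail comes last; its endpoints are not in `𝓘` since their
parent sets differ between the two graphs.

A single covered reversal is realised on models by two row operations on `I − B`: adding
`b = B_wv` times row `v` to row `w` removes the edge `v → w`, and subtracting
`γ = b ω_v / (b² ω_v + ω_w)` times row `w` from row `v` makes the noise covariance `S Ω Sᵀ`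
diagonal again, with variances `ω_v ω_w / (b² ω_v + ω_w)` and `b² ω_v + ω_w` at `v` and `w`.
As `v` and `w` are not intervention targets, `ω_v`, `ω_w` and hence `S` do not depend on the
environment, and `(I − B̃)⁻¹ Ω̃ (I − B̃)⁻ᵀ = (I − B)⁻¹ Ω (I − B)⁻ᵀ` because `I − B̃ = S (I − B)`.
-/

open Matrix

/-- A matrix is a DAG (connectivity) matrix if it is strictly lower triangular up to a
simultaneous permutation of rows and columns (in particular it has zero diagonal). -/
def IsDagMatrix {p : ℕ} (B : Matrix (Fin p) (Fin p) ℝ) : Prop :=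
  ∃ σ : Equiv.Perm (Fin p), ∀ i j : Fin p, σ i ≤ σ j → B i j = 0

/-- A noise-variance matrix: diagonal with positive diagonal entries. -/
def DiagPos {p : ℕ} (Ω : Matrix (Fin p) (Fin p) ℝ) : Prop :=
  Ω.IsDiag ∧ ∀ i, 0 < Ω i i

/-- The covariance matrix `(I − B)⁻¹ Ω (I − B)⁻ᵀ` entailed by the model `(B, Ω)`. -/
noncomputable def CovOf {p : ℕ} (B Ω : Matrix (Fin p) (Fin p) ℝ) : Matrix (Fin p) (Fin p) ℝ :=
  (1 - B)⁻¹ * Ω * ((1 - B)⁻¹)ᵀ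

/-- A directed graph on `[p]` (given as its edge relation, `D a b` meaning `a → b`)
is acyclic if it has no directed cycles. -/
def IsAcyclic {p : ℕ} (D : Fin p → Fin p → Prop) : Prop :=
  ∀ i, ¬ Relation.TransGen D i i

/-- The graph `G(B)` underlying a connectivity matrix `B`: an edge `j → i` whenever
`B i j ≠ 0`. -/
def graphOf {p : ℕ} (B : Matrix (Fin p) (Fin p) ℝ) : Fin p → Fin p → Prop :=
  fun j i => B i j ≠ 0

/-- A matrix `B` is compatible with a graph `D` (written `B ∼ D`) if `B i j ≠ 0`
implies that `j → i` is an edge of `D`. -/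
def Compatible {p : ℕ} (B : Matrix (Fin p) (Fin p) ℝ) (D : Fin p → Fin p → Prop) : Prop :=
  ∀ i j, B i j ≠ 0 → D j i

/-- Two directed graphs have the same skeleton: the same adjacencies ignoring direction. -/
def SameSkeleton {V : Type*} (D D' : V → V → Prop) : Prop :=
  ∀ a b, (D a b ∨ D b a) ↔ (D' a b ∨ D' b a)

/-- `(i, k, j)` is a v-structure: edges `i → k` and `j → k` with `i ≠ j` and `i, j`
non-adjacent. -/
def IsVStruct {V : Type*} (D : V → V → Prop) (i k j : V) : Prop :=
  D i k ∧ D j k ∧ i ≠ j ∧ ¬ D i j ∧ ¬ D j i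

/-- Two directed graphs have the same v-structures. -/
def SameVStructs {V : Type*} (D D' : V → V → Prop) : Prop :=
  ∀ i k j, IsVStruct D i k j ↔ IsVStruct D' i k j

/-- `𝓘`-equivalence of two DAGs: same skeleton, same v-structures, and the same parents
for every node in `𝓘`. -/
def IEquiv {p : ℕ} (I : Set (Fin p)) (D D' : Fin p → Fin p → Prop) : Prop :=
  SameSkeleton D D' ∧ SameVStructs D D' ∧ ∀ i ∈ I, ∀ j, D j i ↔ D' j i

lemma Relation.TransGen.cases_adjoin {α : Type*} {r : α → α → Prop} {x y a b : α}
    (h : Relation.TransGen (fun c d => (c = x ∧ d = y) ∨ r c d) a b) :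
    Relation.TransGen r a b ∨ (Relation.ReflTransGen r a x ∧ Relation.ReflTransGen r y b) := by
  induction h with
  | single h =>
    rcases h with ⟨rfl, rfl⟩ | h
    · exact .inr ⟨.refl, .refl⟩
    · exact .inl (.single h)
  | tail _ hcd ih =>
    rcases hcd with ⟨rfl, rfl⟩ | hcd
    · exact .inr ⟨ih.elim (·.to_reflTransGen) (·.1), .refl⟩
    · exact ih.imp (·.tail hcd) fun h => ⟨h.1, h.2.tail hcd⟩

section Acyclic

variable {p : ℕ} {D : Fin p → Fin p → Prop} {a b c : Fin p}

lemma IsAcyclic.irrefl (hD : IsAcyclic D) (a : Fin p) : ¬ D a a :=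
  fun h => hD a (.single h)

lemma IsAcyclic.asymm (hD : IsAcyclic D) (hab : D a b) : ¬ D b a :=
  fun hba => hD a ((Relation.TransGen.single hab).tail hba)

lemma IsAcyclic.not_cycle₃ (hD : IsAcyclic D) (hab : D a b) (hbc : D b c) : ¬ D c a :=
  fun hca => hD a (((Relation.TransGen.single hab).tail hbc).tail hca)

lemma IsAcyclic.exists_rank (hD : IsAcyclic D) :
    ∃ rank : Fin p → ℕ, ∀ a b, D a b → rank a < rank b := by
  classical
  refine ⟨fun a => (Finset.univ.filter (Relation.TransGen D · a)).card, fun a b hab => ?_⟩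
  refine Finset.card_lt_card ⟨fun c hc => ?_, fun hsub => ?_⟩
  · simp only [Finset.mem_filter, Finset.mem_univ, true_and] at hc ⊢
    exact hc.tail hab
  · have := hsub (by simpa using Relation.TransGen.single hab)
    exact hD a (by simpa using this)

lemma IsAcyclic.exists_perm (hD : IsAcyclic D) :
    ∃ σ : Equiv.Perm (Fin p), ∀ a b, D a b → σ a < σ b := by
  obtain ⟨rank, hrank⟩ := hD.exists_rank
  refine ⟨(Tuple.sort rank).symm, fun a b hab => lt_of_not_ge fun hle => ?_⟩
  have := Tuple.monotone_sort rank hle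
  simp only [Function.comp_apply, Equiv.apply_symm_apply] at this
  exact (hrank a b hab).not_ge this

lemma IsDagMatrix.of_compatible {B : Matrix (Fin p) (Fin p) ℝ} (hD : IsAcyclic D)
    (hB : Compatible B D) : IsDagMatrix B := by
  obtain ⟨σ, hσ⟩ := hD.exists_perm
  exact ⟨σ, fun i j hle => by_contra fun hij => (hσ j i (hB i j hij)).not_ge hle⟩

end Acyclic

section ReverseEdge

variable {V : Type*} {D : V → V → Prop} {v w : V}

def reverseEdge (D : V → V → Prop) (v w : V) : V → V → Prop :=
  fun a b => (a = w ∧ b = v) ∨ (D a b ∧ ¬(a = v ∧ b = w))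

def IsCovered (D : V → V → Prop) (v w : V) : Prop :=
  ∀ u, D u w ↔ D u v ∨ u = v

lemma IsCovered.edge (hcov : IsCovered D v w) : D v w :=
  (hcov v).mpr (.inr rfl)

lemma IsCovered.parent_of_parent_head (hcov : IsCovered D v w) {u : V} (huw : D u w)
    (huv : u ≠ v) : D u v :=
  ((hcov u).mp huw).resolve_right huv

lemma of_reverseEdge {a b : V} (h : reverseEdge D v w a b) (hab : ¬(a = w ∧ b = v)) : D a b :=
  (h.resolve_left hab).1

lemma reverseEdge_of_ne {a b : V} (h : D a b) (hab : ¬(a = v ∧ b = w)) :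
    reverseEdge D v w a b :=
  .inr ⟨h, hab⟩

lemma reverseEdge_iff_of_ne {a b : V} (hvw : ¬(a = v ∧ b = w)) (hwv : ¬(a = w ∧ b = v)) :
    reverseEdge D v w a b ↔ D a b :=
  ⟨(of_reverseEdge · hwv), (reverseEdge_of_ne · hvw)⟩

lemma sameSkeleton_reverseEdge (hvw : D v w) : SameSkeleton D (reverseEdge D v w) := by
  intro a b
  simp only [reverseEdge]
  by_cases h₁ : a = v ∧ b = w
  · obtain ⟨rfl, rfl⟩ := h₁; tauto
  by_cases h₂ : a = w ∧ b = v
  · obtain ⟨rfl, rfl⟩ := h₂; tauto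
  tauto

lemma SameSkeleton.eq_of_forall_not_reversed {D' : V → V → Prop} (hsk : SameSkeleton D D')
    (h : ∀ a b, D a b → ¬ D' b a) : D = D' := by
  ext a b
  refine ⟨fun hab => ((hsk a b).mp (.inl hab)).resolve_right (h a b hab), fun hab => ?_⟩
  exact ((hsk a b).mpr (.inl hab)).resolve_right fun hba => h b a hba hab

lemma IsVStruct.symm {i k j : V} (h : IsVStruct D i k j) : IsVStruct D j k i :=
  ⟨h.2.1, h.1, h.2.2.1.symm, h.2.2.2.2, h.2.2.2.1⟩

lemma IsVStruct.of_sameSkeleton {D' : V → V → Prop} {i k j : V} (hsk : SameSkeleton D D')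
    (h : IsVStruct D i k j) (hik : D' i k) (hjk : D' j k) : IsVStruct D' i k j :=
  have hnadj : ¬(D' i j ∨ D' j i) := fun h' => ((hsk i j).mpr h').elim h.2.2.2.1 h.2.2.2.2
  ⟨hik, hjk, h.2.2.1, fun h' => hnadj (.inl h'), fun h' => hnadj (.inr h')⟩

lemma sameVStructs_reverseEdge (hcov : IsCovered D v w) :
    SameVStructs D (reverseEdge D v w) := by
  have hsk := sameSkeleton_reverseEdge hcov.edge
  intro i k j
  constructor
  · -- `v → w` lies in no v-structure: every other parent of `w` is a parent of `v`
    have hkeep : ∀ {i j}, IsVStruct D i k j → reverseEdge D v w i k := by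
      rintro i j ⟨hik, hjk, hij, -, hji⟩
      refine reverseEdge_of_ne hik ?_
      rintro ⟨hiv, hkw⟩
      subst i k
      exact hji (hcov.parent_of_parent_head hjk hij.symm)
    exact fun h => h.of_sameSkeleton hsk (hkeep h) (hkeep h.symm)
  · have hkeep : ∀ {i j}, IsVStruct (reverseEdge D v w) i k j → D i k := by
      rintro i j ⟨hik, hjk, hij, hij', hji'⟩
      refine of_reverseEdge hik ?_
      rintro ⟨hiw, hkv⟩
      subst i k
      have hjv : D j v := of_reverseEdge hjk fun h => hij h.1.symm
      exact ((hsk j w).mp (.inl ((hcov j).mpr (.inl hjv)))).elim hji' hij'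
    exact fun h => h.of_sameSkeleton (fun a b => (hsk a b).symm) (hkeep h) (hkeep h.symm)

end ReverseEdge

lemma IsAcyclic.reverseEdge {p : ℕ} {D : Fin p → Fin p → Prop} {v w : Fin p}
    (hD : IsAcyclic D) (hcov : IsCovered D v w) : IsAcyclic (reverseEdge D v w) := by
  let D₀ : Fin p → Fin p → Prop := fun a b => D a b ∧ ¬(a = v ∧ b = w)
  have hD₀ : D₀ ≤ D := fun _ _ h => h.1
  -- a path `v ⇝ w` avoiding the edge `v → w` enters `w` from a parent of `v`
  have hno_path : ¬ Relation.ReflTransGen D₀ v w := by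
    intro h
    rcases h.cases_tail with hwv | ⟨u, hvu, huw, hne⟩
    · exact hD.irrefl v (hwv ▸ hcov.edge)
    · have huv : u ≠ v := fun h => hne ⟨h, rfl⟩
      exact hD v (Relation.TransGen.tail' (Relation.ReflTransGen.mono hD₀ _ _ hvu)
        (hcov.parent_of_parent_head huw huv))
  intro a ha
  rcases Relation.TransGen.cases_adjoin ha with h | ⟨haw, hva⟩
  · exact hD a (Relation.TransGen.mono hD₀ _ _ h)
  · exact hno_path (hva.trans haw)

section IEquiv

variable {p : ℕ} {I : Set (Fin p)} {D D' : Fin p → Fin p → Prop} {v w : Fin p}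

lemma IEquiv.notMem_of_reversed (h : IEquiv I D D') (hD : IsAcyclic D) (hD' : IsAcyclic D')
    (hvw : D v w) (hwv : D' w v) : v ∉ I ∧ w ∉ I :=
  ⟨fun hv => hD.asymm hvw ((h.2.2 v hv w).mpr hwv),
    fun hw => hD'.asymm ((h.2.2 w hw v).mp hvw) hwv⟩

lemma IEquiv.reverseEdge (h : IEquiv I D D') (hcov : IsCovered D v w) (hv : v ∉ I)
    (hw : w ∉ I) : IEquiv I (reverseEdge D v w) D' := by
  refine ⟨fun a b => (sameSkeleton_reverseEdge hcov.edge a b).symm.trans (h.1 a b),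
    fun i k j => (sameVStructs_reverseEdge hcov i k j).symm.trans (h.2.1 i k j),
    fun i hi j => (reverseEdge_iff_of_ne ?_ ?_).trans (h.2.2 i hi j)⟩
  · exact fun hij => hw (hij.2 ▸ hi)
  · exact fun hij => hv (hij.2 ▸ hi)

end IEquiv

section Chickering

variable {p : ℕ} {D D' : Fin p → Fin p → Prop} {rank : Fin p → ℕ} {x y : Fin p}

def IsExtremalReversedEdge (D D' : Fin p → Fin p → Prop) (rank : Fin p → ℕ) (x y : Fin p) :
    Prop :=
  D x y ∧ D' y x ∧ (∀ a b, D a b → D' b a → rank y ≤ rank b) ∧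
    ∀ a, D a y → D' y a → rank a ≤ rank x

lemma exists_isExtremalReversedEdge (h : ∃ a b, D a b ∧ D' b a) (rank : Fin p → ℕ) :
    ∃ x y, IsExtremalReversedEdge D D' rank x y := by
  classical
  obtain ⟨a₀, b₀, hab₀⟩ := h
  obtain ⟨y, hy, hymin⟩ := (Finset.univ.filter fun b => ∃ a, D a b ∧ D' b a).exists_min_image
    rank ⟨b₀, by simpa using ⟨a₀, hab₀⟩⟩
  simp only [Finset.mem_filter, Finset.mem_univ, true_and] at hy hymin
  obtain ⟨x, hx, hxmax⟩ := (Finset.univ.filter fun a => D a y ∧ D' y a).exists_max_image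
    rank (by obtain ⟨a, ha⟩ := hy; exact ⟨a, by simpa using ha⟩)
  simp only [Finset.mem_filter, Finset.mem_univ, true_and] at hx hxmax
  exact ⟨x, y, hx.1, hx.2, fun a b hab hba => hymin b ⟨a, hab, hba⟩,
    fun a hay hya => hxmax a ⟨hay, hya⟩⟩

namespace IsExtremalReversedEdge

lemma parent_of_parent_head (h : IsExtremalReversedEdge D D' rank x y) (hD' : IsAcyclic D')
    (hsk : SameSkeleton D D') (hvs : SameVStructs D D')
    (hrank : ∀ a b, D a b → rank a < rank b) {u : Fin p} (huy : D u y) (hux : u ≠ x) :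
    D u x := by
  obtain ⟨hxy, hyx, hmin, hmax⟩ := h
  by_contra hux'
  by_cases hxu : D x u
  · rcases (hsk u y).mp (.inl huy) with huy' | hyu'
    · have hux'' : D' u x := ((hsk x u).mp (.inl hxu)).resolve_left (hD'.not_cycle₃ huy' hyx)
      exact (hmin x u hxu hux'').not_gt (hrank u y huy)
    · exact (hmax u huy hyu').not_gt (hrank x u hxu)
  · have hv : IsVStruct D u y x := ⟨huy, hxy, hux, hux', hxu⟩
    exact hD'.asymm ((hvs u y x).mp hv).2.1 hyx

lemma parent_head_of_parent (h : IsExtremalReversedEdge D D' rank x y) (hD : IsAcyclic D)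
    (hsk : SameSkeleton D D') (hvs : SameVStructs D D')
    (hrank : ∀ a b, D a b → rank a < rank b) {u : Fin p} (hux : D u x) : D u y := by
  obtain ⟨hxy, hyx, hmin, -⟩ := h
  by_contra huy
  have huy_ne : u ≠ y := by rintro rfl; exact hD.asymm hxy hux
  have hnadj : ¬(D' u y ∨ D' y u) := fun h' =>
    ((hsk u y).mpr h').elim huy (hD.not_cycle₃ hux hxy)
  have hxu' : D' x u := by
    refine ((hsk u x).mp (.inl hux)).resolve_left fun hux' => ?_
    have hv : IsVStruct D' u x y := ⟨hux', hyx, huy_ne, fun h' => hnadj (.inl h'),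
      fun h' => hnadj (.inr h')⟩
    exact hD.asymm hxy ((hvs u x y).mpr hv).2.1
  exact (hmin u x hux hxu').not_gt (hrank x y hxy)

end IsExtremalReversedEdge

/-- Chickering's covered-edge lemma. -/
lemma exists_isCovered_reversed (hD : IsAcyclic D) (hD' : IsAcyclic D')
    (hsk : SameSkeleton D D') (hvs : SameVStructs D D') (h : ∃ a b, D a b ∧ D' b a) :
    ∃ v w, IsCovered D v w ∧ D' w v := by
  obtain ⟨rank, hrank⟩ := hD.exists_rank
  obtain ⟨x, y, hxy⟩ := exists_isExtremalReversedEdge h rank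
  refine ⟨x, y, fun u => ⟨fun huy => ?_, ?_⟩, hxy.2.1⟩
  · by_cases hux : u = x
    · exact .inr hux
    · exact .inl (hxy.parent_of_parent_head hD' hsk hvs hrank huy hux)
  · rintro (hux | rfl)
    · exact hxy.parent_head_of_parent hD hsk hvs hrank hux
    · exact hxy.1

end Chickering

section Transformational

variable {p : ℕ} {I : Set (Fin p)} {D D' : Fin p → Fin p → Prop}

def misorientedEdges (D D' : Fin p → Fin p → Prop) : Set (Fin p × Fin p) :=
  {e | D e.1 e.2 ∧ ¬ D' e.1 e.2}

lemma ncard_misorientedEdges_reverseEdge_lt (hD' : IsAcyclic D') {v w : Fin p} (hvw : D v w)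
    (hwv : D' w v) :
    (misorientedEdges (reverseEdge D v w) D').ncard < (misorientedEdges D D').ncard := by
  refine Set.ncard_lt_ncard ⟨?_, fun hsup => ?_⟩
  · rintro ⟨a, b⟩ ⟨hab, hab'⟩
    rcases hab with ⟨rfl, rfl⟩ | hab
    · exact absurd hwv hab'
    · exact ⟨hab.1, hab'⟩
  · obtain ⟨hvw' | hvw', -⟩ := hsup (show (v, w) ∈ misorientedEdges D D' from ⟨hvw, hD'.asymm hwv⟩)
    · obtain rfl : v = w := hvw'.1
      exact hD'.irrefl v hwv
    · exact hvw'.2 ⟨rfl, rfl⟩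

def IsCoveredReversal (I : Set (Fin p)) (D D₁ : Fin p → Fin p → Prop) : Prop :=
  ∃ v w, v ∉ I ∧ w ∉ I ∧ IsCovered D v w ∧ D₁ = reverseEdge D v w

lemma IsCoveredReversal.isAcyclic {D₁ : Fin p → Fin p → Prop} (h : IsCoveredReversal I D D₁)
    (hD : IsAcyclic D) : IsAcyclic D₁ := by
  obtain ⟨v, w, -, -, hcov, rfl⟩ := h
  exact hD.reverseEdge hcov

theorem IEquiv.reflTransGen_isCoveredReversal (hD : IsAcyclic D) (hD' : IsAcyclic D')
    (h : IEquiv I D D') : Relation.ReflTransGen (IsCoveredReversal I) D D' := by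
  induction hn : (misorientedEdges D D').ncard using Nat.strong_induction_on generalizing D
    with | _ n ih =>
  by_cases hrev : ∃ a b, D a b ∧ D' b a
  · obtain ⟨v, w, hcov, hwv⟩ := exists_isCovered_reversed hD hD' h.1 h.2.1 hrev
    obtain ⟨hv, hw⟩ := h.notMem_of_reversed hD hD' hcov.edge hwv
    exact .head ⟨v, w, hv, hw, hcov, rfl⟩ (ih _ (hn ▸ ncard_misorientedEdges_reverseEdge_lt hD'
      hcov.edge hwv) (hD.reverseEdge hcov) (h.reverseEdge hcov hv hw) rfl)
  · simp only [not_exists, not_and] at hrev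
    obtain rfl := h.1.eq_of_forall_not_reversed hrev
    exact .refl

end Transformational

section ReversalMatrix

variable {n : Type*} [Fintype n] [DecidableEq n] {v w : n}

def reversalMatrix {R : Type*} [CommRing R] (v w : n) (b γ : R) : Matrix n n R :=
  transvection v w (-γ) * transvection w v b

lemma det_reversalMatrix {R : Type*} [CommRing R] {b γ : R} (hvw : v ≠ w) :
    (reversalMatrix v w b γ).det = 1 := by
  simp [reversalMatrix, det_transvection_of_ne _ _ hvw, det_transvection_of_ne _ _ hvw.symm]

lemma reversalMatrix_mul_apply {R : Type*} [CommRing R] {b γ : R} (hvw : v ≠ w)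
    (M : Matrix n n R) (i j : n) :
    (reversalMatrix v w b γ * M) i j =
      if i = v then (1 - γ * b) * M v j - γ * M w j
      else if i = w then b * M v j + M w j else M i j := by
  rw [reversalMatrix, Matrix.mul_assoc]
  split_ifs with hv hw
  · subst hv
    simp [transvection_mul_apply_same, transvection_mul_apply_of_ne w i i j hvw]
    ring
  · subst hw
    simp [transvection_mul_apply_same, transvection_mul_apply_of_ne v i i j hvw.symm]
    ring
  · simp [transvection_mul_apply_of_ne v w i j hv, transvection_mul_apply_of_ne w v i j hw]

lemma reversalMatrix_mul_diagonal_mul_transpose {K : Type*} [Field K] {b : K} (hvw : v ≠ w)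
    (d : n → K) (hden : b ^ 2 * d v + d w ≠ 0) :
    reversalMatrix v w b (b * d v / (b ^ 2 * d v + d w)) * diagonal d *
        (reversalMatrix v w b (b * d v / (b ^ 2 * d v + d w)))ᵀ =
      diagonal (Function.update (Function.update d v (d v * d w / (b ^ 2 * d v + d w))) w
        (b ^ 2 * d v + d w)) := by
  rw [← diagonal_transpose d, Matrix.mul_assoc, ← transpose_mul]
  ext i j
  rw [reversalMatrix_mul_apply hvw, transpose_apply, transpose_apply, transpose_apply,
    reversalMatrix_mul_apply hvw, reversalMatrix_mul_apply hvw, reversalMatrix_mul_apply hvw]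
  have hi : v = i ∨ w = i ∨ (i ≠ v ∧ i ≠ w) := by tauto
  have hj : v = j ∨ w = j ∨ (j ≠ v ∧ j ≠ w) := by tauto
  rcases hi with rfl | rfl | ⟨hiv, hiw⟩ <;> rcases hj with rfl | rfl | ⟨hjv, hjw⟩ <;>
    simp [*, Ne.symm, diagonal_apply]
  all_goals first
    | ring1
    | field_simp; ring1
    | grind

end ReversalMatrix

lemma covOf_one_sub_mul {p : ℕ} (S B Ω : Matrix (Fin p) (Fin p) ℝ) (hS : IsUnit S.det) :
    CovOf (1 - S * (1 - B)) (S * Ω * Sᵀ) = CovOf B Ω := by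
  have hSt : IsUnit Sᵀ.det := by rwa [det_transpose]
  simp only [CovOf, sub_sub_cancel, Matrix.mul_inv_rev, transpose_mul, Matrix.mul_assoc,
    nonsing_inv_mul_cancel_left _ _ hS, transpose_nonsing_inv, mul_nonsing_inv_cancel_left _ _ hSt]

section Model

variable {p : ℕ} {E : Type*}

def interventionTargets (d : E → Fin p → ℝ) : Set (Fin p) :=
  {j | ∃ e f, d e j ≠ d f j}

lemma interventionTargets_update (d : E → Fin p → ℝ) (j : Fin p) (c : ℝ) :
    interventionTargets (fun e => Function.update (d e) j c) = interventionTargets d \ {j} := by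
  ext k
  by_cases hk : k = j
  · subst hk; simp [interventionTargets]
  · simp [interventionTargets, hk]

lemma exists_pos_eq_of_notMem_interventionTargets {d : E → Fin p → ℝ} {j : Fin p}
    (hj : j ∉ interventionTargets d) (hpos : ∀ e, 0 < d e j) : ∃ ω, 0 < ω ∧ ∀ e, d e j = ω := by
  rcases isEmpty_or_nonempty E with hE | ⟨⟨e₀⟩⟩
  · exact ⟨1, one_pos, isEmptyElim⟩
  · exact ⟨d e₀ j, hpos e₀, fun e => by_contra fun h => hj ⟨e, e₀, h⟩⟩

variable (E) in
def entailedCovariances (I : Set (Fin p)) (D : Fin p → Fin p → Prop) :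
    Set (E → Matrix (Fin p) (Fin p) ℝ) :=
  {C | ∃ (B : Matrix (Fin p) (Fin p) ℝ) (Ω : E → Matrix (Fin p) (Fin p) ℝ), Compatible B D ∧
    (∀ e, DiagPos (Ω e)) ∧ interventionTargets (fun e => diag (Ω e)) = I ∧
    ∀ e, C e = CovOf B (Ω e)}

end Model

section CoveredReversal

variable {p : ℕ} {E : Type*} {I : Set (Fin p)} {D : Fin p → Fin p → Prop} {v w : Fin p}

lemma compatible_reverseEdge {B : Matrix (Fin p) (Fin p) ℝ} (hD : IsAcyclic D)
    (hcov : IsCovered D v w) (hB : Compatible B D) (γ : ℝ) :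
    Compatible (1 - reversalMatrix v w (B w v) γ * (1 - B)) (reverseEdge D v w) := by
  have hvw : v ≠ w := by rintro rfl; exact hD.irrefl v hcov.edge
  have hzero : ∀ {i j}, ¬ D j i → B i j = 0 := fun h => by_contra fun hij => h (hB _ _ hij)
  have hBvv := hzero (hD.irrefl v)
  have hBww := hzero (hD.irrefl w)
  have hBvw := hzero (hD.asymm hcov.edge)
  have hpa : ∀ {j}, (B v j ≠ 0 ∨ B w j ≠ 0) → D j v ∨ D j w := fun h =>
    h.imp (hB _ _) (hB _ _)
  intro i j hij
  rw [Matrix.sub_apply, reversalMatrix_mul_apply hvw] at hij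
  have hi : v = i ∨ w = i ∨ (i ≠ v ∧ i ≠ w) := by tauto
  rcases hi with rfl | rfl | ⟨hiv, hiw⟩
  · by_cases hjv : j = v
    · simp [hjv, hBvv, hvw.symm, one_apply] at hij
    by_cases hjw : j = w
    · exact .inl ⟨hjw, rfl⟩
    have hBj : B v j ≠ 0 ∨ B w j ≠ 0 := by
      by_contra! h
      simp [h.1, h.2, one_apply, Ne.symm hjv, Ne.symm hjw] at hij
    exact reverseEdge_of_ne ((hpa hBj).elim id (hcov.parent_of_parent_head · hjv))
      fun h => hjv h.1
  · by_cases hjv : j = v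
    · simp [hjv, hBvv, hvw.symm, one_apply] at hij
    by_cases hjw : j = w
    · simp [hjw, hBvw, hBww, hvw, hvw.symm, one_apply] at hij
    have hBj : B v j ≠ 0 ∨ B w j ≠ 0 := by
      by_contra! h
      simp [h.1, h.2, one_apply, hvw.symm, Ne.symm hjv, Ne.symm hjw] at hij
    exact reverseEdge_of_ne ((hpa hBj).elim (fun h => (hcov j).mpr (.inl h)) id)
      fun h => hjv h.1
  · simp [hiv, hiw] at hij
    exact reverseEdge_of_ne (hB i j hij) fun h => hiw h.2

lemma IsCoveredReversal.entailedCovariances_subset {D₁ : Fin p → Fin p → Prop}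
    (h : IsCoveredReversal I D D₁) (hD : IsAcyclic D) :
    entailedCovariances E I D ⊆ entailedCovariances E I D₁ := by
  obtain ⟨v, w, hv, hw, hcov, rfl⟩ := h
  rintro C ⟨B, Ω, hB, hΩ, rfl, hC⟩
  have hvw : v ≠ w := by rintro rfl; exact hD.irrefl v hcov.edge
  obtain ⟨ωv, hωv, hΩv⟩ := exists_pos_eq_of_notMem_interventionTargets hv fun e => (hΩ e).2 v
  obtain ⟨ωw, hωw, hΩw⟩ := exists_pos_eq_of_notMem_interventionTargets hw fun e => (hΩ e).2 w
  set b := B w v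
  set den := b ^ 2 * ωv + ωw
  have hden : 0 < den := by positivity
  set S := reversalMatrix v w b (b * ωv / den)
  have hS : ∀ e, S * Ω e * Sᵀ = diagonal (Function.update
      (Function.update (diag (Ω e)) v (ωv * ωw / den)) w den) := by
    intro e
    have hvv : Ω e v v = ωv := hΩv e
    have hww : Ω e w w = ωw := hΩw e
    have := reversalMatrix_mul_diagonal_mul_transpose hvw (diag (Ω e)) (b := b)
      (by simp only [diag_apply, hvv, hww]; exact hden.ne')
    rw [(hΩ e).1.diagonal_diag] at this
    simpa only [diag_apply, hvv, hww] using this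
  refine ⟨1 - S * (1 - B), fun e => S * Ω e * Sᵀ, compatible_reverseEdge hD hcov hB _,
    fun e => ?_, ?_, fun e => ?_⟩
  · change DiagPos (S * Ω e * Sᵀ)
    rw [hS e]
    refine ⟨isDiag_diagonal _, fun j => ?_⟩
    simp only [diagonal_apply_eq, Function.update_apply, diag_apply]
    split_ifs
    exacts [hden, by positivity, (hΩ e).2 j]
  · simp only [hS, diag_diagonal, interventionTargets_update]
    simp [hv, hw]
  · rw [hC e, covOf_one_sub_mul _ _ _ (by simp [S, det_reversalMatrix hvw])]

lemma entailedCovariances_subset_of_reflTransGen {D' : Fin p → Fin p → Prop} (hD : IsAcyclic D)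
    (h : Relation.ReflTransGen (IsCoveredReversal I) D D') :
    entailedCovariances E I D ⊆ entailedCovariances E I D' := by
  induction h using Relation.ReflTransGen.head_induction_on with
  | refl => exact subset_rfl
  | head hstep _ ih => exact (hstep.entailedCovariances_subset hD).trans (ih (hstep.isAcyclic hD))

end CoveredReversal

theorem iequiv_graphs_entail_same_distributions_general
    {p : ℕ} {E : Type*}
    (I : Set (Fin p)) (D D' : Fin p → Fin p → Prop)
    (hD : IsAcyclic D) (hD' : IsAcyclic D')
    (hequiv : IEquiv I D D') :
    ∀ (B : Matrix (Fin p) (Fin p) ℝ) (Ω : E → Matrix (Fin p) (Fin p) ℝ),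
      IsDagMatrix B → Compatible B D → (∀ e, DiagPos (Ω e)) →
      {j : Fin p | ∃ e f : E, Ω e j j ≠ Ω f j j} = I →
      ∃ Bt : Matrix (Fin p) (Fin p) ℝ, ∃ Ωt : E → Matrix (Fin p) (Fin p) ℝ,
        IsDagMatrix Bt ∧ Compatible Bt D' ∧ (∀ e, DiagPos (Ωt e)) ∧
        {j : Fin p | ∃ e f : E, Ωt e j j ≠ Ωt f j j} = I ∧
        ∀ e, CovOf B (Ω e) = CovOf Bt (Ωt e) := by
  intro B Ω _ hB hΩ hI
  obtain ⟨Bt, Ωt, hBt, hΩt, hIt, hC⟩ :=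
    entailedCovariances_subset_of_reflTransGen hD (hequiv.reflTransGen_isCoveredReversal hD hD')
      ⟨B, Ω, hB, hΩ, hI, fun _ => rfl⟩
  exact ⟨Bt, Ωt, .of_compatible hD' hBt, hBt, hΩt, hIt, hC⟩

/-- `𝓘`-equivalent graphs entail the same distributions: if `𝒟 ∼_𝓘 𝒟'`, then for every
model `(B, {Ω^e})` with `B ∼ 𝒟` and intervention targets exactly `𝓘`, there is a model
`(B~, {Ω~^e})` with `B~ ∼ 𝒟'`, intervention targets exactly `𝓘`, and the same
covariances in every environment. -/
theorem iequiv_graphs_entail_same_distributions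
    {p : ℕ} {E : Type*} [Fintype E]
    (I : Set (Fin p)) (D D' : Fin p → Fin p → Prop)
    (hD : IsAcyclic D) (hD' : IsAcyclic D')
    (hequiv : IEquiv I D D') :
    ∀ (B : Matrix (Fin p) (Fin p) ℝ) (Ω : E → Matrix (Fin p) (Fin p) ℝ),
      IsDagMatrix B → Compatible B D → (∀ e, DiagPos (Ω e)) →
      {j : Fin p | ∃ e f : E, Ω e j j ≠ Ω f j j} = I →
      ∃ Bt : Matrix (Fin p) (Fin p) ℝ, ∃ Ωt : E → Matrix (Fin p) (Fin p) ℝ,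
        IsDagMatrix Bt ∧ Compatible Bt D' ∧ (∀ e, DiagPos (Ωt e)) ∧
        {j : Fin p | ∃ e f : E, Ωt e j j ≠ Ωt f j j} = I ∧
        ∀ e, CovOf B (Ω e) = CovOf Bt (Ωt e) :=
  iequiv_graphs_entail_same_distributions_general I D D' hD hD' hequiv
end

section
/- Let (B, Ω) and (B~, Ω~) be distribution equivalent models and set M := (I−B~)(I−B)⁻¹. Assume all diagonal entries of M are non-zero. Then for every i ∈ [p], if supp(B_{i:}) ≠ supp(B~_{i:}), the i-th row of M has more than one non-zero entry. -/
open Matrix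

lemma dag_diag_zero {p : ℕ} {B : Matrix (Fin p) (Fin p) ℝ} (hB : IsDagMatrix B) (i : Fin p) :
    B i i = 0 := by
  obtain ⟨σ, hσ⟩ := hB
  exact hσ i i le_rfl

lemma det_one_sub_dag {p : ℕ} {B : Matrix (Fin p) (Fin p) ℝ} (hB : IsDagMatrix B) :
    (1 - B).det = 1 := by
  obtain ⟨σ, hσ⟩ := hB
  have h : ((1 - B).submatrix σ.symm σ.symm).det = (1 - B).det :=
    Matrix.det_submatrix_equiv_self _ _
  rw [← h]
  rw [Matrix.det_of_lowerTriangular]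
  · apply Finset.prod_eq_one
    intro j _
    simp [Matrix.submatrix_apply, Matrix.sub_apply, Matrix.one_apply, hσ _ _ le_rfl]
  · intro j k hlt
    simp only [OrderDual.toDual_lt_toDual] at hlt
    have hB0 : B (σ.symm j) (σ.symm k) = 0 := by
      apply hσ
      simp [le_of_lt hlt]
    simp [Matrix.submatrix_apply, Matrix.sub_apply, Matrix.one_apply,
      hB0, hlt.ne]

/-- Structure of `M := (I − B~)(I − B)⁻¹` for different parents: for distribution
equivalent models with all diagonal entries of `M` non-zero, if the supports of the
`i`-th rows of `B` and `B~` differ, then the `i`-th row of `M` has more than one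
non-zero entry. -/
theorem different_support_row_has_two_nonzero
    {p : ℕ} (B Bt Ω Ωt : Matrix (Fin p) (Fin p) ℝ)
    (hB : IsDagMatrix B) (hBt : IsDagMatrix Bt)
    (hΩ : DiagPos Ω) (hΩt : DiagPos Ωt)
    (heq : CovOf B Ω = CovOf Bt Ωt)
    (hdiagM : ∀ i : Fin p, ((1 - Bt) * (1 - B)⁻¹) i i ≠ 0) :
    ∀ i : Fin p, {j : Fin p | B i j ≠ 0} ≠ {j : Fin p | Bt i j ≠ 0} →
      ∃ j l : Fin p, j ≠ l ∧
        ((1 - Bt) * (1 - B)⁻¹) i j ≠ 0 ∧ ((1 - Bt) * (1 - B)⁻¹) i l ≠ 0 := by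
  intro i hne
  by_contra hcon
  push_neg at hcon
  set M := (1 - Bt) * (1 - B)⁻¹ with hM
  have hzero : ∀ j, j ≠ i → M i j = 0 := by
    intro j hj
    by_contra h
    exact hdiagM i (hcon j i hj h)
  have hdet : IsUnit (1 - B).det := by
    rw [det_one_sub_dag hB]; exact isUnit_one
  have hMB : M * (1 - B) = 1 - Bt := by
    rw [hM, mul_assoc, Matrix.nonsing_inv_mul _ hdet, mul_one]
  have hentry : ∀ j, (1 - Bt) i j = M i i * (1 - B) i j := by
    intro j
    rw [← hMB, Matrix.mul_apply]
    rw [Finset.sum_eq_single i]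
    · intro k _ hk
      rw [hzero k hk, zero_mul]
    · intro h; exact absurd (Finset.mem_univ i) h
  have hMii : M i i = 1 := by
    have := hentry i
    simp [Matrix.sub_apply, Matrix.one_apply, dag_diag_zero hB, dag_diag_zero hBt] at this
    linarith
  have hBeq : ∀ j, B i j = Bt i j := by
    intro j
    have := hentry j
    rw [hMii, one_mul] at this
    simp only [Matrix.sub_apply] at this
    linarith
  apply hne
  ext j
  simp [hBeq j]
end
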